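/- arXiv:1205.6432 — 2 statements merged into one kernel-verified Lean document; each statement's English description precedes it below -/
import Mathlib

section
/- For every binary code matrix M ∈ {±1}^{k×l} with k ≥ 2, there exists a vector u ∈ {±1}^l that is q-sensitive for M with q ≥ ⌈Δ(M)/2⌉, where Δ(M) = max_{i∈[k]} min_{j≠i} Δ_h(M[i], M[j]); in particular q ≥ δ(M)/2 where δ(M) = min_{i<j} Δ_h(M[i], M[j]). -/
open MeasureTheory
open scoped ENNReal

noncomputable def argmaxFin {k : ℕ} [NeZero k] (f : Fin k → ℝ) : Fin k :=
  (Finset.univ.filter fun i => ∀ j, f j ≤ f i).min' (by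
    obtain ⟨i, -, hi⟩ := Finset.exists_max_image (Finset.univ : Finset (Fin k)) f
      ⟨⟨0, Nat.pos_of_ne_zero (NeZero.ne k)⟩, Finset.mem_univ _⟩
    exact ⟨i, Finset.mem_filter.mpr ⟨Finset.mem_univ _, fun j => hi j (Finset.mem_univ _)⟩⟩)

def aug {d : ℕ} (x : Fin d → ℝ) : Fin (d + 1) → ℝ := Fin.snoc x 1

/-- halfspaces over ℝ^d, `true` ↔ +1, sign(0) = 1 -/
def halfspace (d : ℕ) : Set ((Fin d → ℝ) → Bool) :=
  { h | ∃ w : Fin (d + 1) → ℝ, h = fun x => decide (0 ≤ ∑ i, w i * aug x i) }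

noncomputable def msvm (d k : ℕ) [NeZero k] : Set ((Fin d → ℝ) → Fin k) :=
  { h | ∃ W : Fin k → Fin (d + 1) → ℝ,
      h = fun x => argmaxFin (fun i => ∑ j, W i j * aug x j) }

def NShatters {X Y : Type*} (H : Set (X → Y)) (S : Set X) : Prop :=
  ∃ f₁ f₂ : X → Y, (∀ x ∈ S, f₁ x ≠ f₂ x) ∧
    ∀ T ⊆ S, ∃ g ∈ H, (∀ x ∈ T, g x = f₁ x) ∧ ∀ x ∈ S \ T, g x = f₂ x

def GShatters {X Y : Type*} (H : Set (X → Y)) (S : Set X) : Prop :=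
  ∃ f : X → Y, ∀ T ⊆ S, ∃ g ∈ H, (∀ x ∈ T, g x = f x) ∧ ∀ x ∈ S \ T, g x ≠ f x

def VCDimLE {X : Type*} (H : Set (X → Bool)) (d : ℕ) : Prop :=
  ∀ S : Finset X, (∀ b : X → Bool, ∃ h ∈ H, ∀ x ∈ S, h x = b x) → S.card ≤ d

inductive LTree (k : ℕ) : Type where
  | leaf : Fin k → LTree k
  | node : LTree k → LTree k → LTree k

def LTree.labels {k : ℕ} : LTree k → List (Fin k)
  | .leaf i => [i]
  | .node l r => l.labels ++ r.labels

/-- `T` is a tree for `k` classes: its leaf labels form a bijection with `[k]`. -/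
def LTree.IsTreeFor {k : ℕ} (T : LTree k) : Prop := T.labels.Perm (List.finRange k)

def treeClass {X : Type*} {k : ℕ} (H : Set (X → Bool)) : LTree k → Set (X → Fin k)
  | .leaf i => {fun _ => i}
  | .node l r => { f | ∃ c ∈ H, ∃ fl ∈ treeClass H l, ∃ fr ∈ treeClass H r,
      f = fun x => if c x then fr x else fl x }

def treesClass {X : Type*} (H : Set (X → Bool)) (k : ℕ) : Set (X → Fin k) :=
  ⋃ T ∈ { T : LTree k | T.IsTreeFor }, treeClass H T

noncomputable def decode {k : ℕ} [NeZero k] {J : Type*} [Fintype J]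
    (M : Fin k → J → ℝ) (u : J → Bool) : Fin k :=
  argmaxFin (fun i => ∑ j, M i j * (if u j then (1 : ℝ) else -1))

noncomputable def ecocClass {X : Type*} {k : ℕ} [NeZero k] {J : Type*} [Fintype J]
    (H : Set (X → Bool)) (M : Fin k → J → ℝ) : Set (X → Fin k) :=
  { g | ∃ h : J → X → Bool, (∀ j, h j ∈ H) ∧ g = fun x => decode M (fun j => h j x) }

def ovaCode (k : ℕ) : Fin k → Fin k → ℝ := fun i j => if i = j then 1 else -1

def apCode (k : ℕ) : Fin k → { p : Fin k × Fin k // p.1 < p.2 } → ℝ :=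
  fun i p => if i = p.1.1 then -1 else if i = p.1.2 then 1 else 0

noncomputable def errStar {X : Type*} [MeasurableSpace X] {k : ℕ}
    (D : Measure (X × Fin k)) (H : Set (X → Fin k)) : ℝ≥0∞ :=
  ⨅ h ∈ H, D { p | h p.1 ≠ p.2 }

noncomputable def errStarBin {X : Type*} [MeasurableSpace X]
    (Q : Measure (X × Bool)) (H : Set (X → Bool)) : ℝ≥0∞ :=
  ⨅ h ∈ H, Q { p | h p.1 ≠ p.2 }

inductive PTree : Type where
  | leaf : PTree
  | node : PTree → PTree → PTree

def PTree.nLeaves : PTree → ℕ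
  | .leaf => 1
  | .node l r => l.nLeaves + r.nLeaves

def PTree.leftLeaves : PTree → ℕ
  | .leaf => 0
  | .node l _ => l.nLeaves

def PTree.rightLeaves : PTree → ℕ
  | .leaf => 0
  | .node _ r => r.nLeaves

def PTree.labelAux {k : ℕ} (f : ℕ → Fin k) : PTree → ℕ → LTree k
  | .leaf, n => .leaf (f n)
  | .node l r, n => .node (PTree.labelAux f l n) (PTree.labelAux f r (n + l.nLeaves))

/-! Let `i` maximise the distance `r` from row `M i` to the nearest other row. If `r > 0`, the
word spelling `M i` decodes to `i` and the word spelling any other row does not, so some edge of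
the cube joins a word decoding to `i` to one decoding to some `m ≠ i`, and `Δ_h(M i, M m) ≥ r`.

For rows `p, q` and a word `u`, let `A = votes M u p q` be the coordinates where the rows differ
and `u` follows `p`. Coordinatewise, `4|A| = (score_p u - score_q u) + 2 Δ_h(M p, M q)`, and
flipping a coordinate of `A` lowers the margin `score_p - score_q` by 4. So if `u` decodes to `p`
with a margin in `[0, 4)`, every coordinate of `A` is sensitive and `|A| ≥ Δ_h(M p, M q) / 2`.
Along an edge the margin moves by at most 4, from `≥ 0` at one end to `≤ 0` at the other, so one
of the two ends is such a point. -/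

open Finset Function

section BoolCube

variable {J : Type*} [Fintype J] [DecidableEq J]

theorem hammingDist_update_not_add_one {u v : J → Bool} {a : J} (ha : u a ≠ v a) :
    hammingDist (update u a (!u a)) v + 1 = hammingDist u v := by
  have : ({j | update u a (!u a) j ≠ v j} : Finset J) = ({j | u j ≠ v j} : Finset J).erase a := by
    ext j
    by_cases hj : j = a
    · subst hj; simp [ha]
    · simp [hj]
  unfold hammingDist
  rw [this, card_erase_add_one (mem_filter.mpr ⟨mem_univ a, ha⟩)]

theorem exists_update_not_notMem_of_mem_of_notMem {S : Set (J → Bool)} {u v : J → Bool}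
    (hu : u ∈ S) (hv : v ∉ S) :
    ∃ w ∈ S, ∃ a, update w a (!w a) ∉ S := by
  induction h : hammingDist u v generalizing u with
  | zero => exact absurd (hammingDist_eq_zero.mp h ▸ hu) hv
  | succ n ih =>
    obtain ⟨a, ha⟩ : ∃ a, u a ≠ v a := by
      by_contra! huv
      rw [funext huv, hammingDist_self] at h
      exact n.succ_ne_zero h.symm
    by_cases hS : update u a (!u a) ∈ S
    · exact ih hS (by have := hammingDist_update_not_add_one ha; omega)
    · exact ⟨u, hu, a, hS⟩

end BoolCube

theorem sInf_hammingDist_lt_le_sInf_hammingDist_ne {k : ℕ} {J β : Type*} [Fintype J]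
    [DecidableEq β] (M : Fin k → J → β) (i : Fin k) :
    sInf {n : ℕ | ∃ a b : Fin k, a < b ∧ n = hammingDist (M a) (M b)} ≤
      sInf {n : ℕ | ∃ j : Fin k, j ≠ i ∧ n = hammingDist (M i) (M j)} := by
  rcases Set.eq_empty_or_nonempty {n : ℕ | ∃ j : Fin k, j ≠ i ∧ n = hammingDist (M i) (M j)}
    with h | hne
  · have hi : ∀ j, j = i := fun j => by
      by_contra hj
      exact Set.eq_empty_iff_forall_notMem.mp h _ ⟨j, hj, rfl⟩
    have hδ : {n : ℕ | ∃ a b : Fin k, a < b ∧ n = hammingDist (M a) (M b)} = ∅ :=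
      Set.eq_empty_of_forall_notMem fun _ ⟨a, b, hab, _⟩ => hab.ne ((hi a).trans (hi b).symm)
    simp [hδ]
  · refine le_csInf hne ?_
    rintro _ ⟨j, hji, rfl⟩
    rcases hji.lt_or_gt with h | h
    · exact Nat.sInf_le ⟨j, i, h, hammingDist_comm _ _⟩
    · exact Nat.sInf_le ⟨i, j, h, rfl⟩

theorem le_argmaxFin {k : ℕ} [NeZero k] (f : Fin k → ℝ) (i : Fin k) : f i ≤ f (argmaxFin f) :=
  (mem_filter.mp (min'_mem {i | ∀ j, f j ≤ f i} _)).2 i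

section SignCode

variable {k : ℕ} {J : Type*} [Fintype J]

def boolSign (b : Bool) : ℝ := if b then 1 else -1

theorem boolSign_not (b : Bool) : boolSign (!b) = -boolSign b := by
  cases b <;> simp [boolSign]

theorem boolSign_decide_eq_one {x : ℝ} (hx : x = 1 ∨ x = -1) : boolSign (decide (x = 1)) = x := by
  rcases hx with rfl | rfl <;> norm_num [boolSign]

def score (M : Fin k → J → ℝ) (u : J → Bool) (i : Fin k) : ℝ := ∑ j, M i j * boolSign (u j)

variable {M : Fin k → J → ℝ}

theorem score_update_not [DecidableEq J] (u : J → Bool) (a : J) (i : Fin k) :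
    score M (update u a (!u a)) i = score M u i - 2 * (M i a * boolSign (u a)) := by
  have h : ∀ j, boolSign (update u a (!u a) j) =
      boolSign (u j) - if j = a then 2 * boolSign (u a) else 0 := by
    intro j
    by_cases hj : j = a
    · subst hj; simp only [update_self, boolSign_not, if_true]; ring
    · simp [hj]
  simp only [score, h, mul_sub, sum_sub_distrib, mul_ite, mul_zero, sum_ite_eq', mem_univ, if_true]
  ring

noncomputable def votes (M : Fin k → J → ℝ) (u : J → Bool) (p q : Fin k) : Finset J :=
  {j | M p j ≠ M q j ∧ boolSign (u j) = M p j}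

theorem four_mul_card_votes (hM : ∀ i j, M i j = 1 ∨ M i j = -1) (u : J → Bool) (p q : Fin k) :
    4 * (#(votes M u p q) : ℝ) = score M u p - score M u q + 2 * hammingDist (M p) (M q) := by
  have hcoord : ∀ j, (if M p j ≠ M q j ∧ boolSign (u j) = M p j then (4 : ℝ) else 0) =
      M p j * boolSign (u j) - M q j * boolSign (u j) + if M p j ≠ M q j then 2 else 0 := by
    intro j
    rcases hM p j with hp | hp <;> rcases hM q j with hq | hq <;> cases u j <;>
      norm_num [hp, hq, boolSign]
  simp only [votes, hammingDist, natCast_card_filter, mul_sum, score, ← sum_sub_distrib,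
    ← sum_add_distrib, mul_ite, mul_one, mul_zero, hcoord]

theorem score_sub_score_update_not_of_mem_votes [DecidableEq J]
    (hM : ∀ i j, M i j = 1 ∨ M i j = -1) {u : J → Bool} {p q : Fin k} {a : J}
    (ha : a ∈ votes M u p q) :
    score M (update u a (!u a)) p - score M (update u a (!u a)) q =
      score M u p - score M u q - 4 := by
  obtain ⟨hpq, hpa⟩ := (mem_filter.mp ha).2
  have hqa : M q a = -boolSign (u a) := by
    rcases hM p a with hp | hp <;> rcases hM q a with hq | hq <;> simp_all
  have hsq : boolSign (u a) * boolSign (u a) = 1 := by cases u a <;> norm_num [boolSign]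
  rw [score_update_not, score_update_not, ← hpa, hqa]
  linear_combination -4 * hsq

theorem score_sub_score_sub_four_le [DecidableEq J]
    (hM : ∀ i j, M i j = 1 ∨ M i j = -1) (u : J → Bool) (p q : Fin k) (a : J) :
    score M u p - score M u q - 4 ≤
      score M (update u a (!u a)) p - score M (update u a (!u a)) q := by
  rw [score_update_not, score_update_not]
  rcases hM p a with hp | hp <;> rcases hM q a with hq | hq <;> cases u a <;>
    norm_num [hp, hq, boolSign] <;> linarith

noncomputable def spell (M : Fin k → J → ℝ) (p : Fin k) : J → Bool := fun j => decide (M p j = 1)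

theorem score_sub_score_spell (hM : ∀ i j, M i j = 1 ∨ M i j = -1) (p q : Fin k) :
    score M (spell M p) p - score M (spell M p) q = 2 * hammingDist (M p) (M q) := by
  have hempty : votes M (spell M p) q p = ∅ := by
    refine filter_false_of_mem fun j _ ⟨hqp, hq⟩ => hqp ?_
    rw [← hq, spell, boolSign_decide_eq_one (hM p j)]
  have := four_mul_card_votes hM (spell M p) q p
  rw [hempty, card_empty, hammingDist_comm] at this
  push_cast at this
  linarith

theorem score_lt_score_spell (hM : ∀ i j, M i j = 1 ∨ M i j = -1) {p q : Fin k}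
    (hpq : M p ≠ M q) : score M (spell M p) q < score M (spell M p) p := by
  have := score_sub_score_spell hM p q
  have : (0 : ℝ) < hammingDist (M p) (M q) := by exact_mod_cast hammingDist_pos.mpr hpq
  linarith

end SignCode

section Decoding

variable {k : ℕ} [NeZero k] {J : Type*} [Fintype J]

theorem score_le_score_decode (M : Fin k → J → ℝ) (u : J → Bool) (i : Fin k) :
    score M u i ≤ score M u (decode M u) :=
  le_argmaxFin (score M u) i

variable {M : Fin k → J → ℝ}

theorem decode_ne_of_score_lt {u : J → Bool} {p q : Fin k}
    (h : score M u p < score M u q) : decode M u ≠ p := by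
  rintro rfl
  exact (score_le_score_decode M u q).not_gt h

theorem decode_eq_of_forall_score_lt {u : J → Bool} {p : Fin k}
    (h : ∀ q ≠ p, score M u q < score M u p) : decode M u = p := by
  by_contra hne
  exact (score_le_score_decode M u p).not_gt (h _ hne)

variable [DecidableEq J]

noncomputable def sensitivity (M : Fin k → J → ℝ) (u : J → Bool) : ℕ :=
  #{j | decode M u ≠ decode M (update u j (!u j))}

theorem hammingDist_le_two_mul_sensitivity (hM : ∀ i j, M i j = 1 ∨ M i j = -1)
    {u : J → Bool} {p q : Fin k} (hu : decode M u = p)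
    (hle : score M u q ≤ score M u p) (hlt : score M u p < score M u q + 4) :
    hammingDist (M p) (M q) ≤ 2 * sensitivity M u := by
  have hcard : #(votes M u p q) ≤ sensitivity M u := by
    refine card_le_card fun a ha => mem_filter.mpr ⟨mem_univ a, ?_⟩
    have := score_sub_score_update_not_of_mem_votes hM ha
    rw [hu]
    exact (decode_ne_of_score_lt (q := q) (by linarith)).symm
  have hvotes := four_mul_card_votes hM u p q
  have hcard' : (#(votes M u p q) : ℝ) ≤ sensitivity M u := by exact_mod_cast hcard
  have : (hammingDist (M p) (M q) : ℝ) ≤ 2 * sensitivity M u := by linarith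
  exact_mod_cast this

theorem exists_hammingDist_decode_le_two_mul_sensitivity
    (hM : ∀ i j, M i j = 1 ∨ M i j = -1) (u : J → Bool) (a : J) :
    ∃ w, hammingDist (M (decode M u)) (M (decode M (update u a (!u a)))) ≤
      2 * sensitivity M w := by
  set v := update u a (!u a)
  have hu := score_le_score_decode M u (decode M v)
  have hv := score_le_score_decode M v (decode M u)
  by_cases hlt : score M u (decode M u) < score M u (decode M v) + 4
  · exact ⟨u, hammingDist_le_two_mul_sensitivity hM rfl hu hlt⟩
  · -- a margin of at least 4 at `u` leaves a margin of exactly 0 at `v`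
    have := score_sub_score_sub_four_le hM u (decode M u) (decode M v) a
    rw [hammingDist_comm]
    exact ⟨v, hammingDist_le_two_mul_sensitivity hM rfl hv (by linarith)⟩

theorem exists_sInf_hammingDist_le_two_mul_sensitivity (hM : ∀ i j, M i j = 1 ∨ M i j = -1)
    (i : Fin k) :
    ∃ u, sInf {n : ℕ | ∃ j : Fin k, j ≠ i ∧ n = hammingDist (M i) (M j)} ≤
      2 * sensitivity M u := by
  set r := sInf {n : ℕ | ∃ j : Fin k, j ≠ i ∧ n = hammingDist (M i) (M j)}
  rcases Nat.eq_zero_or_pos r with hr | hr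
  · exact ⟨spell M i, hr ▸ Nat.zero_le _⟩
  have hle : ∀ j ≠ i, r ≤ hammingDist (M i) (M j) := fun j hj => Nat.sInf_le ⟨j, hj, rfl⟩
  have hrow : ∀ j ≠ i, M i ≠ M j := fun j hj =>
    hammingDist_pos.mp (hr.trans_le (hle j hj))
  obtain ⟨_, j, hji, -⟩ := Nat.nonempty_of_pos_sInf hr
  have hi : decode M (spell M i) = i :=
    decode_eq_of_forall_score_lt fun q hq => score_lt_score_spell hM (hrow q hq)
  have hj : decode M (spell M j) ≠ i :=
    decode_ne_of_score_lt (score_lt_score_spell hM (hrow j hji).symm)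
  obtain ⟨w, hw, a, ha⟩ :=
    exists_update_not_notMem_of_mem_of_notMem (S := {w | decode M w = i}) hi hj
  obtain ⟨u, hu⟩ := exists_hammingDist_decode_le_two_mul_sensitivity hM w a
  rw [show decode M w = i from hw] at hu
  exact ⟨u, (hle _ ha).trans hu⟩

end Decoding

theorem stmt17_general (k l : ℕ) [NeZero k] (M : Fin k → Fin l → ℝ)
    (hM : ∀ i j, M i j = 1 ∨ M i j = -1) :
    ∃ u : Fin l → Bool,
      ((Finset.univ.sup (fun i : Fin k =>
          sInf { n : ℕ | ∃ j : Fin k, j ≠ i ∧ n = hammingDist (M i) (M j) }) + 1) / 2 ≤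
        (Finset.univ.filter (fun j : Fin l =>
          decode M u ≠ decode M (Function.update u j (!u j)))).card) ∧
      (((sInf { n : ℕ | ∃ i j : Fin k, i < j ∧ n = hammingDist (M i) (M j) } : ℕ) : ℝ) / 2 ≤
        ((Finset.univ.filter (fun j : Fin l =>
          decode M u ≠ decode M (Function.update u j (!u j)))).card : ℝ)) := by
  obtain ⟨i, -, hi⟩ := exists_mem_eq_sup univ univ_nonempty fun i : Fin k =>
    sInf {n : ℕ | ∃ j : Fin k, j ≠ i ∧ n = hammingDist (M i) (M j)}
  obtain ⟨u, hu⟩ := exists_sInf_hammingDist_le_two_mul_sensitivity hM i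
  have hδ := (sInf_hammingDist_lt_le_sInf_hammingDist_ne M i).trans hu
  refine ⟨u, ?_, ?_⟩
  · change _ ≤ sensitivity M u
    omega
  · change _ ≤ (sensitivity M u : ℝ)
    rw [div_le_iff₀ two_pos, mul_comm]
    exact_mod_cast hδ

/-- For every binary code matrix M ∈ {±1}^{k×l} with k ≥ 2 there exists a vector
u ∈ {±1}^l that is q-sensitive for M with q ≥ ⌈Δ(M)/2⌉, where
Δ(M) = max_i min_{j≠i} Δ_h(M[i],M[j]); in particular q ≥ δ(M)/2 with
δ(M) = min_{i<j} Δ_h(M[i],M[j]). -/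
theorem stmt17 (k l : ℕ) [NeZero k] (hk : 2 ≤ k) (M : Fin k → Fin l → ℝ)
    (hM : ∀ i j, M i j = 1 ∨ M i j = -1) :
    ∃ u : Fin l → Bool,
      ((Finset.univ.sup (fun i : Fin k =>
          sInf { n : ℕ | ∃ j : Fin k, j ≠ i ∧ n = hammingDist (M i) (M j) }) + 1) / 2 ≤
        (Finset.univ.filter (fun j : Fin l =>
          decode M u ≠ decode M (Function.update u j (!u j)))).card) ∧
      (((sInf { n : ℕ | ∃ i j : Fin k, i < j ∧ n = hammingDist (M i) (M j) } : ℕ) : ℝ) / 2 ≤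
        ((Finset.univ.filter (fun j : Fin l =>
          decode M u ≠ decode M (Function.update u j (!u j)))).card : ℝ)) :=
  stmt17_general k l M hM
end

section
/- For all integers d ≥ 2 and l ≥ 2, the class of halfspaces W^d over ℝ^d is richer than both F^l and G^l: there exists a map ι : [d]×[l] → ℝ^d such that every f ∈ F^l equals h ∘ ι for some halfspace h ∈ W^d, and there exists a map ι' : [d]×[l] → ℝ^d such that every g ∈ G^l equals h ∘ ι' for some halfspace h ∈ W^d. -/
/-! For each target function, one affine functional takes at the image of `⟨u, v⟩` a value
`(dominant term in v - i, of the sign of j) + (bounded term, of the sign of f u at v = i)`.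

For `G^l` the points are `e_u + v • 1` and the weights are the signs of `g` shifted by the
constant that makes them sum to `2j`; the value is then `g u + 2j (v - i)`.

For `F^l` the dominant term has to be `5j (v - i)²`, which up to a constant is the affine
function vanishing on the tangent at `(i, i²)` to the parabola `t ↦ (t, t²)` in the first two
coordinates. Column `v` sits at `(v, v²)`, and the points of column `i` must not leave that
tangent: they are pushed along it (`u = 0`), not at all (`u = 1`), or along the remaining axes
(`u ≥ 2`). -/

open MeasureTheory
open scoped ENNReal

/-- The class F^l of {±1}-valued functions on [d]×[l] given by f^{i,j}(u,v) = f(u) if v = i and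
j otherwise (`true` ↔ +1). -/
def Fclass (d l : ℕ) : Set (Fin d × Fin l → Bool) :=
  { F | ∃ (f : Fin d → Bool) (i : Fin l) (j : Bool),
      F = fun p => if p.2 = i then f p.1 else j }

/-- The class G^l of {±1}-valued functions on [d]×[l] given by g^{i,j}(u,v) = g(u) if v = i,
j if v > i, and −j if v < i (`true` ↔ +1). -/
def Gclass (d l : ℕ) : Set (Fin d × Fin l → Bool) :=
  { G | ∃ (g : Fin d → Bool) (i : Fin l) (j : Bool),
      G = fun p => if p.2 = i then g p.1 else if i < p.2 then j else !j }

def Bool.toSign (b : Bool) : ℝ := if b then 1 else -1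

@[simp] lemma Bool.toSign_true : true.toSign = 1 := rfl

@[simp] lemma Bool.toSign_false : false.toSign = -1 := rfl

lemma Bool.abs_toSign (b : Bool) : |b.toSign| = 1 := by cases b <;> simp

lemma Bool.toSign_mul_self (b : Bool) : b.toSign * b.toSign = 1 := by cases b <;> norm_num

lemma Bool.toSign_not (b : Bool) : (!b).toSign = -b.toSign := by cases b <;> simp

lemma decide_nonneg_eq_of_toSign_mul_pos {b : Bool} {r : ℝ} (h : 0 < b.toSign * r) :
    decide (0 ≤ r) = b := by
  cases b
  · simp only [Bool.toSign_false, neg_mul, one_mul, neg_pos] at h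
    simpa only [decide_eq_false_iff_not, not_le] using h
  · simp only [Bool.toSign_true, one_mul] at h
    simpa only [decide_eq_true_eq] using h.le

lemma affine_mem_halfspace {d : ℕ} (w : Fin d → ℝ) (b : ℝ) :
    (fun x => decide (0 ≤ w ⬝ᵥ x + b)) ∈ halfspace d :=
  ⟨Fin.snoc w b, by
    funext x
    rw [decide_eq_decide]
    simp only [dotProduct, aug, Fin.sum_univ_castSucc, Fin.snoc_castSucc, Fin.snoc_last, mul_one]⟩

lemma exists_halfspace_comp_eq {X : Type*} {d : ℕ} (F : X → Bool) (ι : X → Fin d → ℝ)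
    (w : Fin d → ℝ) (b : ℝ) (hF : ∀ x, 0 < (F x).toSign * (w ⬝ᵥ ι x + b)) :
    ∃ h ∈ halfspace d, F = h ∘ ι :=
  ⟨_, affine_mem_halfspace w b,
    funext fun x => (decide_nonneg_eq_of_toSign_mul_pos (hF x)).symm⟩

lemma mul_linear_pos {σ K e t : ℝ} (hσ : |σ| = 1) (ht : 1 ≤ t) (h : |e| < K) :
    0 < σ * (σ * K * t + e) := by
  have hσσ : σ * σ = 1 := by rw [← abs_mul_abs_self, hσ, one_mul]
  have he : -(σ * e) ≤ |e| := by simpa [abs_mul, hσ] using neg_le_abs (σ * e)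
  have hK : K ≤ K * t := le_mul_of_one_le_right ((abs_nonneg e).trans h.le) ht
  linear_combination h + hK + he - K * t * hσσ

lemma mul_quadratic_pos {σ K c e t : ℝ} (hσ : |σ| = 1) (ht : 1 ≤ |t|) (h : |c| + |e| < K) :
    0 < σ * (σ * K * t ^ 2 + c * t + e) := by
  have hσσ : σ * σ = 1 := by rw [← abs_mul_abs_self, hσ, one_mul]
  have hct : -(σ * c * t + σ * e) ≤ |c| * |t| + |e| := by
    calc -(σ * c * t + σ * e) ≤ |σ * c * t + σ * e| := neg_le_abs _
      _ ≤ |σ * c * t| + |σ * e| := abs_add_le _ _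
      _ = |c| * |t| + |e| := by simp [abs_mul, hσ]
  have hK : 0 ≤ K := (add_nonneg (abs_nonneg c) (abs_nonneg e)).trans h.le
  have ht2 : K * |t| ≤ K * t ^ 2 := by
    rw [← sq_abs]
    exact mul_le_mul_of_nonneg_left (by nlinarith) hK
  have hce : |c| * |t| + |e| < K * |t| := by nlinarith [abs_nonneg e]
  linear_combination ht2 + hce + hct - K * t ^ 2 * hσσ

lemma one_le_natCast_sub_natCast {a b : ℕ} (h : a < b) : 1 ≤ (b : ℝ) - a := by
  have : (a : ℝ) + 1 ≤ b := by exact_mod_cast h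
  linarith

lemma one_le_abs_natCast_sub_natCast {a b : ℕ} (h : a ≠ b) : 1 ≤ |(a : ℝ) - b| := by
  rcases h.lt_or_gt with h | h
  · exact (one_le_natCast_sub_natCast h).trans (abs_sub_comm (a : ℝ) b ▸ le_abs_self _)
  · exact (one_le_natCast_sub_natCast h).trans (le_abs_self _)

lemma Fin.eq_zero_or_eq_one_or_succ_succ {n : ℕ} (u : Fin (n + 2)) :
    u = 0 ∨ u = 1 ∨ ∃ k : Fin n, u = k.succ.succ := by
  rcases Fin.eq_zero_or_eq_succ u with rfl | ⟨u, rfl⟩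
  · exact Or.inl rfl
  rcases Fin.eq_zero_or_eq_succ u with rfl | ⟨k, rfl⟩
  · exact Or.inr (Or.inl rfl)
  · exact Or.inr (Or.inr ⟨k, rfl⟩)

section Parabola

variable {n : ℕ}

noncomputable def tangentPushedParabola (u : Fin (n + 2)) (t : ℝ) : Fin (n + 2) → ℝ :=
  t • Pi.single 0 1 + t ^ 2 • Pi.single 1 1 +
    (4⁻¹ : ℝ) • (if u = 0 then Pi.single 0 1 + (2 * t) • Pi.single 1 1
      else if u = 1 then 0 else Pi.single u 1)

lemma tangent_dotProduct_tangentPushedParabola (u : Fin (n + 2)) (s t : ℝ) :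
    (Pi.single 1 1 - (2 * s) • Pi.single 0 1) ⬝ᵥ tangentPushedParabola u t =
      (t - s) ^ 2 + (if u = 0 then 2⁻¹ else 0) * (t - s) - s ^ 2 := by
  obtain rfl | rfl | ⟨u, rfl⟩ := u.eq_zero_or_eq_one_or_succ_succ
  all_goals
    simp only [tangentPushedParabola, zero_ne_one, one_ne_zero, Fin.succ_ne_zero,
      Fin.succ_succ_ne_one, dotProduct_add, dotProduct_smul, dotProduct_single, Pi.sub_apply,
      Pi.smul_apply, Pi.single_eq_same, Pi.single_eq_of_ne, ne_eq, not_false_eq_true, smul_eq_mul,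
      smul_zero, add_zero, mul_one, mul_zero, sub_zero, zero_sub, if_true, if_false]
    ring

lemma sub_const_dotProduct_tangentPushedParabola (r : Fin (n + 2) → ℝ) (u : Fin (n + 2))
    (t : ℝ) : (fun k => r k - r 1) ⬝ᵥ tangentPushedParabola u t =
      (r 0 - r 1) * t + (r u - r 1) / 4 := by
  obtain rfl | rfl | ⟨u, rfl⟩ := u.eq_zero_or_eq_one_or_succ_succ
  all_goals
    simp only [tangentPushedParabola, zero_ne_one, one_ne_zero, Fin.succ_ne_zero,
      Fin.succ_succ_ne_one, dotProduct_add, dotProduct_smul, dotProduct_single, smul_eq_mul,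
      smul_zero, add_zero, mul_one, if_true, if_false]
    ring

end Parabola

theorem exists_embedding_Fclass (n l : ℕ) :
    ∃ ι : Fin (n + 2) × Fin l → (Fin (n + 2) → ℝ),
      ∀ F ∈ Fclass (n + 2) l, ∃ h ∈ halfspace (n + 2), F = h ∘ ι := by
  refine ⟨fun p => tangentPushedParabola p.1 (p.2 : ℕ), ?_⟩
  rintro F ⟨f, i, j, rfl⟩
  set r : Fin (n + 2) → ℝ := fun u => (f u).toSign
  set σ := j.toSign
  set s : ℝ := ((i : ℕ) : ℝ)
  set w : Fin (n + 2) → ℝ :=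
    (fun k => r k - r 1) + (5 * σ) • (Pi.single 1 1 - (2 * s) • Pi.single 0 1)
  set b : ℝ := 5 * σ * s ^ 2 - (r 0 - r 1) * s + r 1 / 4
  refine exists_halfspace_comp_eq _ _ w b ?_
  rintro ⟨u, v⟩
  set c : ℝ := 5 * σ * (if u = 0 then 2⁻¹ else 0) + (r 0 - r 1)
  have hvalue : w ⬝ᵥ tangentPushedParabola u (v : ℕ) + b =
      σ * 5 * ((v : ℕ) - s) ^ 2 + c * ((v : ℕ) - s) + r u / 4 := by
    rw [add_dotProduct, smul_dotProduct, sub_const_dotProduct_tangentPushedParabola,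
      tangent_dotProduct_tangentPushedParabola, smul_eq_mul]
    ring
  simp only [hvalue]
  by_cases hvi : v = i
  · subst hvi
    simp only [if_true, sub_self, s, r]
    nlinarith [(f u).toSign_mul_self]
  have hc : |c| ≤ 5 / 2 + 2 := by
    calc |c| ≤ |5 * σ * (if u = 0 then 2⁻¹ else 0)| + (|r 0| + |r 1|) :=
          (abs_add_le _ _).trans (add_le_add_right (abs_sub _ _) _)
      _ ≤ 5 / 2 + 2 := by
        simp only [abs_mul, σ, r, Bool.abs_toSign]
        split_ifs <;> norm_num
  have he : |r u / 4| = 1 / 4 := by simp [abs_div, r, Bool.abs_toSign]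
  rw [if_neg hvi]
  exact mul_quadratic_pos j.abs_toSign (one_le_abs_natCast_sub_natCast (Fin.val_ne_of_ne hvi))
    (by linarith)

theorem exists_embedding_Gclass (d l : ℕ) [NeZero d] :
    ∃ ι' : Fin d × Fin l → (Fin d → ℝ),
      ∀ G ∈ Gclass d l, ∃ h ∈ halfspace d, G = h ∘ ι' := by
  refine ⟨fun p => Pi.single p.1 1 + ((p.2 : ℕ) : ℝ) • 1, ?_⟩
  rintro G ⟨g, i, j, rfl⟩
  set r : Fin d → ℝ := fun u => (g u).toSign
  set σ := j.toSign
  set s : ℝ := ((i : ℕ) : ℝ)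
  set μ : ℝ := (2 * σ - ∑ k, r k) / d
  have hsum : (r + μ • 1) ⬝ᵥ 1 = 2 * σ := by
    simp only [dotProduct_one, Finset.sum_add_distrib, Pi.add_apply, Pi.smul_apply, Pi.one_apply,
      smul_eq_mul, mul_one, Finset.sum_const, Finset.card_univ, Fintype.card_fin, nsmul_eq_mul, μ]
    rw [mul_div_cancel₀ _ (Nat.cast_ne_zero.mpr (NeZero.ne d))]
    ring
  refine exists_halfspace_comp_eq _ _ (r + μ • 1) (-(2 * σ * s) - μ) ?_
  rintro ⟨u, v⟩
  have hvalue :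
      (r + μ • 1) ⬝ᵥ (Pi.single u 1 + ((v : ℕ) : ℝ) • 1) + (-(2 * σ * s) - μ) =
        σ * 2 * ((v : ℕ) - s) + r u := by
    rw [dotProduct_add, dotProduct_single, dotProduct_smul, hsum]
    simp only [Pi.add_apply, Pi.smul_apply, Pi.one_apply, smul_eq_mul]
    ring
  simp only [hvalue]
  rcases lt_trichotomy v i with hvi | rfl | hvi
  · rw [if_neg hvi.ne, if_neg (lt_asymm hvi), Bool.toSign_not]
    have := mul_linear_pos ((abs_neg σ).trans j.abs_toSign) (one_le_natCast_sub_natCast hvi)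
      (show |r u| < 2 by simp [r, Bool.abs_toSign])
    linear_combination this
  · simp only [if_true, s, sub_self, mul_zero, zero_add, r, Bool.toSign_mul_self, zero_lt_one]
  · rw [if_neg hvi.ne', if_pos hvi]
    exact mul_linear_pos j.abs_toSign (one_le_natCast_sub_natCast hvi)
      (show |r u| < 2 by simp [r, Bool.abs_toSign])

theorem stmt18_general (d l : ℕ) (hd : 2 ≤ d) :
    (∃ ι : Fin d × Fin l → (Fin d → ℝ),
      ∀ F ∈ Fclass d l, ∃ h ∈ halfspace d, F = h ∘ ι) ∧
    (∃ ι' : Fin d × Fin l → (Fin d → ℝ),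
      ∀ G ∈ Gclass d l, ∃ h ∈ halfspace d, G = h ∘ ι') := by
  obtain ⟨n, rfl⟩ := Nat.exists_eq_add_of_le' hd
  exact ⟨exists_embedding_Fclass n l, exists_embedding_Gclass (n + 2) l⟩

/-- For all integers d, l ≥ 2, the class of halfspaces W^d over ℝ^d is richer
than both F^l and G^l: there is a map ι : [d]×[l] → ℝ^d such that every F ∈ F^l equals h ∘ ι
for some halfspace h ∈ W^d, and a map ι' : [d]×[l] → ℝ^d such that every G ∈ G^l equals
h ∘ ι' for some halfspace h ∈ W^d. -/
theorem stmt18 (d l : ℕ) (hd : 2 ≤ d) (hl : 2 ≤ l) :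
    (∃ ι : Fin d × Fin l → (Fin d → ℝ),
      ∀ F ∈ Fclass d l, ∃ h ∈ halfspace d, F = h ∘ ι) ∧
    (∃ ι' : Fin d × Fin l → (Fin d → ℝ),
      ∀ G ∈ Gclass d l, ∃ h ∈ halfspace d, G = h ∘ ι') :=
  stmt18_general d l hd
end
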